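/- arXiv:0909.1970 — 2 statements merged into one kernel-verified Lean document; each statement's English description precedes it below -/
import Mathlib

section
/- Let F_1 = T_3^2, the 3×3 matrix whose columns are the three 0-1 columns of length 3 with exactly two ones. For every n ≥ 3, the matrix M_n = [T_n^0, T_n^1, T_n^n, S_n], where S_n consists of all n-columns with exactly two ones at least one of which lies in the first or the n-th row, is F_1-saturated and has 3n − 2 columns; hence sat(n, F_1) ≤ 3n − 2. -/
/-- `F` is a submatrix of `M` (up to row/column permutations): there are injections
selecting rows and columns of `M` giving `F`. -/
def IsSubmatrix {α : Type*} {k c n m : ℕ} (F : Fin k → Fin c → α) (M : Fin n → Fin m → α) :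
    Prop :=
  ∃ r : Fin k → Fin n, ∃ s : Fin c → Fin m,
    Function.Injective r ∧ Function.Injective s ∧ ∀ i j, M (r i) (s j) = F i j

/-- A matrix is simple if its columns are pairwise distinct. -/
def Simple' {α : Type*} {n m : ℕ} (M : Fin n → Fin m → α) : Prop :=
  ∀ j₁ j₂ : Fin m, (∀ i, M i j₁ = M i j₂) → j₁ = j₂

/-- `C` occurs as a column of `M`. -/
def IsCol {α : Type*} {n m : ℕ} (M : Fin n → Fin m → α) (C : Fin n → α) : Prop :=
  ∃ j, ∀ i, M i j = C i

/-- The matrix `[M, C]` obtained by appending the column `C` to `M`. -/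
def addCol {α : Type*} {n m : ℕ} (M : Fin n → Fin m → α) (C : Fin n → α) :
    Fin n → Fin (m + 1) → α :=
  fun i j => if h : (j : ℕ) < m then M i ⟨j, h⟩ else C i

/-- `M` is `F`-saturated: simple, `F`-free, and adding any missing column creates `F`. -/
def Saturated {α : Type*} {k c n m : ℕ} (F : Fin k → Fin c → α) (M : Fin n → Fin m → α) :
    Prop :=
  Simple' M ∧ ¬ IsSubmatrix F M ∧
    ∀ C : Fin n → α, ¬ IsCol M C → IsSubmatrix F (addCol M C)

/-- The set of sizes (numbers of columns) of `F`-saturated `n`-row matrices. -/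
def satSet {α : Type*} {k c : ℕ} (F : Fin k → Fin c → α) (n : ℕ) : Set ℕ :=
  {m | ∃ M : Fin n → Fin m → α, Saturated F M}

/-- The set of sizes of simple `F`-free `n`-row matrices. -/
def forbSet {α : Type*} {k c : ℕ} (F : Fin k → Fin c → α) (n : ℕ) : Set ℕ :=
  {m | ∃ M : Fin n → Fin m → α, Simple' M ∧ ¬ IsSubmatrix F M}

/-- `K_k`: the `k × 2^k` 0-1 matrix of all distinct 0-1 columns of length `k`. -/
def Kfull (k : ℕ) : Fin k → Fin (2 ^ k) → Bool :=
  fun i j => Nat.testBit j.val i.val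

def T32 : Fin 3 → Fin 3 → Bool :=
  ![![false, true, true], ![true, false, true], ![true, true, false]]

/-- A column is allowed in `M_n = [T_n^0, T_n^1, T_n^n, S_n]`: it is all-zero, a unit
column, the all-one column, or has exactly two ones of which exactly one lies in the
first or the last row. -/
def ColSpec18 (n : ℕ) (C : Fin n → Bool) : Prop :=
  (∀ i, C i = false) ∨
  (∃ i, C i = true ∧ ∀ i', C i' = true → i' = i) ∨
  (∀ i, C i = true) ∨
  ((Finset.univ.filter fun i => C i = true).card = 2 ∧
    (∃ i, C i = true ∧ ((i : ℕ) = 0 ∨ (i : ℕ) = n - 1)) ∧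
    (∃ i, C i = true ∧ (i : ℕ) ≠ 0 ∧ (i : ℕ) ≠ n - 1))

def colOf18 (n : ℕ) (j : ℕ) : Fin n → Bool := fun i =>
  if j = 0 then false
  else if j ≤ n then decide ((i : ℕ) = j - 1)
  else if j = n + 1 then true
  else if j ≤ 2*n - 1 then decide ((i:ℕ) = 0 ∨ (i:ℕ) = j - (n+1))
  else decide ((i:ℕ) = n - 1 ∨ (i:ℕ) = j - (2*n-1))

lemma colOf18_zero (n : ℕ) (i : Fin n) : colOf18 n 0 i = false := by simp [colOf18]

lemma colOf18_unit (n j : ℕ) (h1 : 1 ≤ j) (h2 : j ≤ n) (i : Fin n) :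
    colOf18 n j i = decide ((i : ℕ) = j - 1) := by
  unfold colOf18; rw [if_neg (by omega), if_pos h2]

lemma colOf18_all (n : ℕ) (i : Fin n) : colOf18 n (n+1) i = true := by
  unfold colOf18; rw [if_neg (by omega), if_neg (by omega), if_pos rfl]

lemma colOf18_p0 (n j : ℕ) (h1 : n + 2 ≤ j) (h2 : j ≤ 2*n - 1) (i : Fin n) :
    colOf18 n j i = decide ((i:ℕ) = 0 ∨ (i:ℕ) = j - (n+1)) := by
  unfold colOf18; rw [if_neg (by omega), if_neg (by omega), if_neg (by omega), if_pos h2]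

lemma colOf18_pn (n j : ℕ) (h1 : 2*n ≤ j) (hn : 3 ≤ n) (i : Fin n) :
    colOf18 n j i = decide ((i:ℕ) = n - 1 ∨ (i:ℕ) = j - (2*n-1)) := by
  unfold colOf18
  rw [if_neg (by omega), if_neg (by omega), if_neg (by omega), if_neg (by omega)]

lemma colOf18_inj (n : ℕ) (hn : 3 ≤ n) {j1 j2 : ℕ} (h1 : j1 < 3*n-2) (h2 : j2 < 3*n-2)
    (h : ∀ i : Fin n, colOf18 n j1 i = colOf18 n j2 i) : j1 = j2 := by
  have hcase : ∀ j : ℕ, j < 3*n-2 → j = 0 ∨ (1 ≤ j ∧ j ≤ n) ∨ j = n+1 ∨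
      (n+2 ≤ j ∧ j ≤ 2*n-1) ∨ (2*n ≤ j ∧ j ≤ 3*n-3) := by intro j hj; omega
  rcases hcase j1 h1 with e1 | ⟨e1, e1'⟩ | e1 | ⟨e1, e1'⟩ | ⟨e1, e1'⟩ <;>
    rcases hcase j2 h2 with e2 | ⟨e2, e2'⟩ | e2 | ⟨e2, e2'⟩ | ⟨e2, e2'⟩
  -- j1 = 0 row
  · omega
  · subst e1; have := h ⟨j2-1, by omega⟩
    rw [colOf18_zero, colOf18_unit n j2 e2 e2'] at this; simp at this
  · subst e1; subst e2; have := h ⟨0, by omega⟩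
    rw [colOf18_zero, colOf18_all] at this; simp at this
  · subst e1; have := h ⟨0, by omega⟩
    rw [colOf18_zero, colOf18_p0 n j2 e2 e2'] at this; simp at this
  · subst e1; have := h ⟨n-1, by omega⟩
    rw [colOf18_zero, colOf18_pn n j2 e2 hn] at this; simp at this
  -- j1 unit row
  · subst e2; have := h ⟨j1-1, by omega⟩
    rw [colOf18_zero, colOf18_unit n j1 e1 e1'] at this; simp at this
  · have := h ⟨j1-1, by omega⟩
    rw [colOf18_unit n j1 e1 e1', colOf18_unit n j2 e2 e2'] at this
    simp [decide_eq_decide] at this; omega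
  · subst e2
    have t1 := h ⟨0, by omega⟩
    have t2 := h ⟨n-1, by omega⟩
    rw [colOf18_unit n j1 e1 e1', colOf18_all] at t1
    rw [colOf18_unit n j1 e1 e1', colOf18_all] at t2
    simp at t1 t2; omega
  · have t1 := h ⟨0, by omega⟩
    have t2 := h ⟨j2-(n+1), by omega⟩
    rw [colOf18_unit n j1 e1 e1', colOf18_p0 n j2 e2 e2'] at t1
    rw [colOf18_unit n j1 e1 e1', colOf18_p0 n j2 e2 e2'] at t2
    simp [decide_eq_decide] at t1 t2; omega
  · have t1 := h ⟨n-1, by omega⟩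
    have t2 := h ⟨j2-(2*n-1), by omega⟩
    rw [colOf18_unit n j1 e1 e1', colOf18_pn n j2 e2 hn] at t1
    rw [colOf18_unit n j1 e1 e1', colOf18_pn n j2 e2 hn] at t2
    simp [decide_eq_decide] at t1 t2; omega
  -- j1 all row
  · subst e1; subst e2; have := h ⟨0, by omega⟩
    rw [colOf18_zero, colOf18_all] at this; simp at this
  · subst e1
    have t1 := h ⟨0, by omega⟩
    have t2 := h ⟨n-1, by omega⟩
    rw [colOf18_unit n j2 e2 e2', colOf18_all] at t1
    rw [colOf18_unit n j2 e2 e2', colOf18_all] at t2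
    simp at t1 t2; omega
  · omega
  · subst e1; have := h ⟨n-1, by omega⟩
    rw [colOf18_all, colOf18_p0 n j2 e2 e2'] at this
    simp at this; omega
  · subst e1; have := h ⟨0, by omega⟩
    rw [colOf18_all, colOf18_pn n j2 e2 hn] at this
    simp at this; omega
  -- j1 p0 row
  · subst e2; have := h ⟨0, by omega⟩
    rw [colOf18_zero, colOf18_p0 n j1 e1 e1'] at this; simp at this
  · have t1 := h ⟨0, by omega⟩
    have t2 := h ⟨j1-(n+1), by omega⟩
    rw [colOf18_unit n j2 e2 e2', colOf18_p0 n j1 e1 e1'] at t1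
    rw [colOf18_unit n j2 e2 e2', colOf18_p0 n j1 e1 e1'] at t2
    simp [decide_eq_decide] at t1 t2; omega
  · subst e2; have := h ⟨n-1, by omega⟩
    rw [colOf18_all, colOf18_p0 n j1 e1 e1'] at this
    simp at this; omega
  · have := h ⟨j1-(n+1), by omega⟩
    rw [colOf18_p0 n j1 e1 e1', colOf18_p0 n j2 e2 e2'] at this
    simp [decide_eq_decide] at this; omega
  · have := h ⟨0, by omega⟩
    rw [colOf18_p0 n j1 e1 e1', colOf18_pn n j2 e2 hn] at this
    simp [decide_eq_decide] at this; omega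
  -- j1 pn row
  · subst e2; have := h ⟨n-1, by omega⟩
    rw [colOf18_zero, colOf18_pn n j1 e1 hn] at this; simp at this
  · have t1 := h ⟨n-1, by omega⟩
    have t2 := h ⟨j1-(2*n-1), by omega⟩
    rw [colOf18_unit n j2 e2 e2', colOf18_pn n j1 e1 hn] at t1
    rw [colOf18_unit n j2 e2 e2', colOf18_pn n j1 e1 hn] at t2
    simp [decide_eq_decide] at t1 t2; omega
  · subst e2; have := h ⟨0, by omega⟩
    rw [colOf18_all, colOf18_pn n j1 e1 hn] at this
    simp at this; omega
  · have := h ⟨0, by omega⟩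
    rw [colOf18_p0 n j2 e2 e2', colOf18_pn n j1 e1 hn] at this
    simp [decide_eq_decide] at this; omega
  · have := h ⟨j1-(2*n-1), by omega⟩
    rw [colOf18_pn n j1 e1 hn, colOf18_pn n j2 e2 hn] at this
    simp [decide_eq_decide] at this; omega

lemma pair_filter {n : ℕ} {a b : Fin n} (hab : a ≠ b) :
    (Finset.univ.filter fun i => (decide (i = a ∨ i = b)) = true) = {a, b} := by
  ext i
  simp [Finset.mem_insert]

lemma two_ones {n : ℕ} {C : Fin n → Bool}
    (h : (Finset.univ.filter fun i => C i = true).card = 2) {a b : Fin n} (hab : a ≠ b)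
    (ha : C a = true) (hb : C b = true) : ∀ i, C i = true ↔ (i = a ∨ i = b) := by
  classical
  have hsub : ({a, b} : Finset (Fin n)) ⊆ Finset.univ.filter fun i => C i = true := by
    intro i hi
    simp only [Finset.mem_insert, Finset.mem_singleton] at hi
    rcases hi with rfl | rfl <;> simp [ha, hb]
  have hcard : (Finset.univ.filter fun i => C i = true).card ≤ ({a, b} : Finset (Fin n)).card := by
    rw [h, Finset.card_pair hab]
  have := Finset.eq_of_subset_of_card_le hsub hcard
  intro i
  constructor
  · intro hi
    have : i ∈ ({a, b} : Finset (Fin n)) := by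
      rw [this]; simp [hi]
    simpa using this
  · rintro (rfl | rfl) <;> assumption

lemma pair_spec {n : ℕ} (hn : 3 ≤ n) {a b : Fin n} (hab : a ≠ b)
    (hcfg : (((a:ℕ) = 0 ∨ (a:ℕ) = n-1) ∧ (b:ℕ) ≠ 0 ∧ (b:ℕ) ≠ n-1) ∨
            (((b:ℕ) = 0 ∨ (b:ℕ) = n-1) ∧ (a:ℕ) ≠ 0 ∧ (a:ℕ) ≠ n-1)) :
    ColSpec18 n (fun i => decide (i = a ∨ i = b)) := by
  refine Or.inr (Or.inr (Or.inr ⟨?_, ?_, ?_⟩))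
  · rw [pair_filter hab, Finset.card_pair hab]
  · rcases hcfg with ⟨h1, _⟩ | ⟨h1, _⟩
    · exact ⟨a, by simp, h1⟩
    · exact ⟨b, by simp, h1⟩
  · rcases hcfg with ⟨_, h2⟩ | ⟨_, h2⟩
    · exact ⟨b, by simp, h2⟩
    · exact ⟨a, by simp, h2⟩

lemma bool_eq_decide {b : Bool} {p : Prop} [Decidable p] (h : b = true ↔ p) : b = decide p := by
  cases b
  · have hp : ¬p := fun hp => absurd (h.mpr hp) (by simp)
    exact (decide_eq_false hp).symm
  · exact (decide_eq_true (h.mp rfl)).symm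

lemma colOf18_spec (n : ℕ) (hn : 3 ≤ n) (j : ℕ) (hj : j < 3*n-2) :
    ColSpec18 n (colOf18 n j) := by
  have hcase : j = 0 ∨ (1 ≤ j ∧ j ≤ n) ∨ j = n+1 ∨
      (n+2 ≤ j ∧ j ≤ 2*n-1) ∨ (2*n ≤ j ∧ j ≤ 3*n-3) := by omega
  rcases hcase with e | ⟨e, e'⟩ | e | ⟨e, e'⟩ | ⟨e, e'⟩
  · subst e; exact Or.inl (colOf18_zero n)
  · refine Or.inr (Or.inl ⟨⟨j-1, by omega⟩, ?_, ?_⟩)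
    · rw [colOf18_unit n j e e']; simp
    · intro i hi; rw [colOf18_unit n j e e'] at hi; simp at hi
      exact Fin.ext hi
  · subst e; exact Or.inr (Or.inr (Or.inl (colOf18_all n)))
  · have heq : colOf18 n j = fun i => decide (i = (⟨0, by omega⟩ : Fin n) ∨ i = ⟨j-(n+1), by omega⟩) := by
      funext i
      rw [colOf18_p0 n j e e']
      simp [Fin.ext_iff]
    rw [heq]
    refine pair_spec hn ?_ (Or.inl ⟨Or.inl rfl, by simp; omega⟩)
    simp [Fin.ext_iff]; omega
  · have heq : colOf18 n j = fun i => decide (i = (⟨n-1, by omega⟩ : Fin n) ∨ i = ⟨j-(2*n-1), by omega⟩) := by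
      funext i
      rw [colOf18_pn n j e hn]
      simp [Fin.ext_iff]
    rw [heq]
    refine pair_spec hn ?_ (Or.inl ⟨Or.inr rfl, by simp; omega⟩)
    simp [Fin.ext_iff]; omega

lemma colOf18_surj (n : ℕ) (hn : 3 ≤ n) (C : Fin n → Bool) (hC : ColSpec18 n C) :
    ∃ j < 3*n-2, ∀ i, C i = colOf18 n j i := by
  rcases hC with h | ⟨i0, hi0, huniq⟩ | h | ⟨hcard, ⟨e, he, hext⟩, ⟨t, ht, ht0, htn⟩⟩
  · exact ⟨0, by omega, fun i => by rw [colOf18_zero, h]⟩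
  · refine ⟨(i0:ℕ)+1, by omega, fun i => ?_⟩
    rw [colOf18_unit n _ (by omega) (by omega)]
    simp only [Nat.add_sub_cancel]
    apply bool_eq_decide
    constructor
    · intro hi; rw [huniq i hi]
    · intro hi; rwa [Fin.ext_iff.mpr hi]
  · exact ⟨n+1, by omega, fun i => by rw [colOf18_all, h]⟩
  · have het : e ≠ t := by
      intro hh; rw [hh] at hext; tauto
    have hones := two_ones hcard het he ht
    rcases hext with h0 | hN
    · -- e is row 0
      refine ⟨n+1+(t:ℕ), by omega, fun i => ?_⟩
      rw [colOf18_p0 n _ (by omega) (by omega)]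
      have : n+1+(t:ℕ) - (n+1) = (t:ℕ) := by omega
      rw [this]
      apply bool_eq_decide
      rw [hones i]
      constructor
      · rintro (rfl | rfl)
        · exact Or.inl h0
        · exact Or.inr rfl
      · rintro (hi | hi)
        · exact Or.inl (Fin.ext (by omega))
        · exact Or.inr (Fin.ext hi)
    · -- e is row n-1
      refine ⟨2*n-1+(t:ℕ), by omega, fun i => ?_⟩
      rw [colOf18_pn n _ (by omega) hn]
      have : 2*n-1+(t:ℕ) - (2*n-1) = (t:ℕ) := by omega
      rw [this]
      apply bool_eq_decide
      rw [hones i]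
      constructor
      · rintro (rfl | rfl)
        · exact Or.inl hN
        · exact Or.inr rfl
      · rintro (hi | hi)
        · exact Or.inl (Fin.ext (by omega))
        · exact Or.inr (Fin.ext hi)

lemma col_pattern {n : ℕ} {C : Fin n → Bool} (hspec : ColSpec18 n C)
    {a b c : Fin n} (hbc : b ≠ c) (ha : C a = false) (hb : C b = true) (hc : C c = true) :
    ((((b:ℕ)=0 ∨ (b:ℕ)=n-1)) ∨ (((c:ℕ)=0 ∨ (c:ℕ)=n-1))) ∧
      (¬(((b:ℕ)=0 ∨ (b:ℕ)=n-1)) ∨ ¬(((c:ℕ)=0 ∨ (c:ℕ)=n-1))) := by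
  rcases hspec with h | ⟨i, hi, hu⟩ | h | ⟨hcard, ⟨e, he, hee⟩, ⟨t, ht, ht0, htn⟩⟩
  · rw [h b] at hb; exact absurd hb (by simp)
  · exact absurd ((hu b hb).trans (hu c hc).symm) hbc
  · rw [h a] at ha; exact absurd ha (by simp)
  · have hones := two_ones hcard hbc hb hc
    have hE := (hones e).mp he
    have hT := (hones t).mp ht
    constructor
    · rcases hE with rfl | rfl
      · exact Or.inl hee
      · exact Or.inr hee
    · rcases hT with rfl | rfl
      · exact Or.inl (by rintro (h | h); exacts [ht0 h, htn h])
      · exact Or.inr (by rintro (h | h); exacts [ht0 h, htn h])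

lemma trio {A B C : Prop} (h0 : (B ∨ C) ∧ (¬B ∨ ¬C)) (h1 : (A ∨ C) ∧ (¬A ∨ ¬C))
    (h2 : (A ∨ B) ∧ (¬A ∨ ¬B)) : False := by tauto

lemma free_of_spec {n m : ℕ} (M : Fin n → Fin m → Bool)
    (hspec : ∀ j, ColSpec18 n (fun i => M i j)) : ¬ IsSubmatrix T32 M := by
  rintro ⟨r, s, hr, hs, hM⟩
  have e00 : M (r 0) (s 0) = false := (hM 0 0).trans rfl
  have e10 : M (r 1) (s 0) = true := (hM 1 0).trans rfl
  have e20 : M (r 2) (s 0) = true := (hM 2 0).trans rfl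
  have e01 : M (r 0) (s 1) = true := (hM 0 1).trans rfl
  have e11 : M (r 1) (s 1) = false := (hM 1 1).trans rfl
  have e21 : M (r 2) (s 1) = true := (hM 2 1).trans rfl
  have e02 : M (r 0) (s 2) = true := (hM 0 2).trans rfl
  have e12 : M (r 1) (s 2) = true := (hM 1 2).trans rfl
  have e22 : M (r 2) (s 2) = false := (hM 2 2).trans rfl
  have P0 := col_pattern (hspec (s 0)) (hr.ne (show (1:Fin 3) ≠ 2 by decide)) e00 e10 e20
  have P1 := col_pattern (hspec (s 1)) (hr.ne (show (0:Fin 3) ≠ 2 by decide)) e11 e01 e21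
  have P2 := col_pattern (hspec (s 2)) (hr.ne (show (0:Fin 3) ≠ 1 by decide)) e22 e02 e12
  exact trio P0 P1 P2

lemma vec3_inj {α : Type*} {x y z : α} (h1 : x ≠ y) (h2 : x ≠ z) (h3 : y ≠ z) :
    Function.Injective ![x, y, z] := by
  intro a b hab
  fin_cases a <;> fin_cases b <;> simp_all

lemma build18 {n m : ℕ} (M : Fin n → Fin m → Bool) (C : Fin n → Bool)
    {z u v : Fin n} (hzu : z ≠ u) (hzv : z ≠ v) (huv : u ≠ v)
    (hCz : C z = false) (hCu : C u = true) (hCv : C v = true)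
    {j1 j2 : Fin m} (hj1 : ∀ i, M i j1 = decide (i = z ∨ i = v))
    (hj2 : ∀ i, M i j2 = decide (i = z ∨ i = u)) :
    IsSubmatrix T32 (addCol M C) := by
  have huz : u ≠ z := Ne.symm hzu
  have hvz : v ≠ z := Ne.symm hzv
  have hvu : v ≠ u := Ne.symm huv
  have hj12 : j1 ≠ j2 := by
    intro hh
    have t1 := hj1 u
    have t2 := hj2 u
    rw [hh] at t1
    rw [t1] at t2
    simp [huz, huv] at t2
  refine ⟨![z, u, v], ![⟨m, by omega⟩, ⟨(j1:ℕ), by omega⟩, ⟨(j2:ℕ), by omega⟩], ?_, ?_, ?_⟩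
  · exact vec3_inj hzu hzv huv
  · apply vec3_inj
    · intro hh; rw [Fin.ext_iff] at hh; simp at hh; omega
    · intro hh; rw [Fin.ext_iff] at hh; simp at hh; omega
    · intro hh; rw [Fin.ext_iff] at hh; simp at hh; exact hj12 (Fin.ext hh)
  · intro i j
    fin_cases i <;> fin_cases j <;>
      (simp [addCol, T32, Matrix.vecHead, Matrix.vecTail, hj1, hj2, hCz, hCu, hCv, hzu, hzv,
        huv, huz, hvz, hvu, j1.isLt, j2.isLt]; try rfl)

lemma notSpec_cases {n : ℕ} (hn : 3 ≤ n) {C : Fin n → Bool} (hC : ¬ ColSpec18 n C) :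
    ∃ z u v : Fin n, z ≠ u ∧ z ≠ v ∧ u ≠ v ∧ C z = false ∧ C u = true ∧ C v = true ∧
      ((((z:ℕ) = 0 ∨ (z:ℕ) = n-1) ∧ ((u:ℕ) ≠ 0 ∧ (u:ℕ) ≠ n-1) ∧ ((v:ℕ) ≠ 0 ∧ (v:ℕ) ≠ n-1)) ∨
       (((z:ℕ) ≠ 0 ∧ (z:ℕ) ≠ n-1) ∧ ((u:ℕ) = 0 ∨ (u:ℕ) = n-1) ∧ ((v:ℕ) = 0 ∨ (v:ℕ) = n-1))) := by
  classical
  have h0n : (0:ℕ) ≠ n - 1 := by omega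
  set x0 : Fin n := ⟨0, by omega⟩ with hx0
  set xe : Fin n := ⟨n-1, by omega⟩ with hxe
  by_cases hb : C x0 = true ∧ C xe = true
  · -- both extremes true; find an interior false row
    have hna : ¬ ∀ i, C i = true := fun hall => hC (Or.inr (Or.inr (Or.inl hall)))
    push_neg at hna
    obtain ⟨a, ha⟩ := hna
    have ha' : C a = false := by simpa using ha
    have ha0 : (a:ℕ) ≠ 0 := by
      intro h
      rw [show a = x0 from Fin.ext h, hb.1] at ha'
      exact absurd ha' (by simp)
    have haN : (a:ℕ) ≠ n-1 := by
      intro h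
      rw [show a = xe from Fin.ext h, hb.2] at ha'
      exact absurd ha' (by simp)
    have n1 : a ≠ x0 := fun h => ha0 (by rw [h])
    have n2 : a ≠ xe := fun h => haN (by rw [h])
    have n3 : x0 ≠ xe := fun h => h0n (by rw [Fin.ext_iff] at h; exact h)
    exact ⟨a, x0, xe, n1, n2, n3, ha', hb.1, hb.2,
      Or.inr ⟨⟨ha0, haN⟩, Or.inl rfl, Or.inr rfl⟩⟩
  · -- some extreme is false
    have hextfalse : C x0 = false ∨ C xe = false := by
      by_contra hcon
      push_neg at hcon
      exact hb ⟨by simpa using hcon.1, by simpa using hcon.2⟩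
    have huniqext : ∀ x y : Fin n, ((x:ℕ) = 0 ∨ (x:ℕ) = n-1) → ((y:ℕ) = 0 ∨ (y:ℕ) = n-1) →
        C x = true → C y = true → x = y := by
      intro x y hx hy hcx hcy
      have hvx : x = x0 ∨ x = xe := by
        rcases hx with h | h
        exacts [Or.inl (Fin.ext h), Or.inr (Fin.ext h)]
      have hvy : y = x0 ∨ y = xe := by
        rcases hy with h | h
        exacts [Or.inl (Fin.ext h), Or.inr (Fin.ext h)]
      rcases hvx with rfl | rfl <;> rcases hvy with rfl | rfl <;>
        rcases hextfalse with h | h <;> simp_all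
    by_cases hint : ∀ p q : Fin n, (p:ℕ) ≠ 0 → (p:ℕ) ≠ n-1 → (q:ℕ) ≠ 0 → (q:ℕ) ≠ n-1 →
        C p = true → C q = true → p = q
    · -- at most one interior true: derive that C satisfies the spec, contradiction
      exfalso
      apply hC
      by_cases hz : ∀ i, C i = false
      · exact Or.inl hz
      push_neg at hz
      obtain ⟨i0, hi0⟩ := hz
      have hi0' : C i0 = true := by simpa using hi0
      by_cases h1 : ∀ i', C i' = true → i' = i0
      · exact Or.inr (Or.inl ⟨i0, hi0', h1⟩)
      push_neg at h1
      obtain ⟨i1, hi1, hne⟩ := h1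
      -- produce an extreme true eE and interior true tI
      obtain ⟨eE, tI, hCe, hCt, hext, hti, hnet⟩ :
          ∃ eE tI : Fin n, C eE = true ∧ C tI = true ∧ ((eE:ℕ) = 0 ∨ (eE:ℕ) = n-1) ∧
            ((tI:ℕ) ≠ 0 ∧ (tI:ℕ) ≠ n-1) ∧ eE ≠ tI := by
        by_cases he0 : (i0:ℕ) = 0 ∨ (i0:ℕ) = n-1 <;>
          by_cases he1 : (i1:ℕ) = 0 ∨ (i1:ℕ) = n-1
        · exact absurd (huniqext i1 i0 he1 he0 hi1 hi0') hne
        · push_neg at he1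
          exact ⟨i0, i1, hi0', hi1, he0, he1, fun h => hne (h.symm)⟩
        · push_neg at he0
          exact ⟨i1, i0, hi1, hi0', he1, he0, hne⟩
        · push_neg at he0 he1
          exact absurd (hint i1 i0 he1.1 he1.2 he0.1 he0.2 hi1 hi0') hne
      have htrues : ∀ i, C i = true → i = eE ∨ i = tI := by
        intro i hi
        by_cases hei : (i:ℕ) = 0 ∨ (i:ℕ) = n-1
        · exact Or.inl (huniqext i eE hei hext hi hCe)
        · push_neg at hei
          exact Or.inr (hint i tI hei.1 hei.2 hti.1 hti.2 hi hCt)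
      have hfil : (Finset.univ.filter fun i => C i = true) = {eE, tI} := by
        ext i
        simp only [Finset.mem_filter, Finset.mem_univ, true_and, Finset.mem_insert,
          Finset.mem_singleton]
        constructor
        · exact htrues i
        · rintro (rfl | rfl) <;> assumption
      refine Or.inr (Or.inr (Or.inr ⟨?_, ⟨eE, hCe, hext⟩, ⟨tI, hCt, hti.1, hti.2⟩⟩))
      rw [hfil]
      exact Finset.card_pair hnet
    · -- two distinct interior trues exist
      push_neg at hint
      obtain ⟨p, q, hp0, hpN, hq0, hqN, hcp, hcq, hpq⟩ := hint
      rcases hextfalse with h | h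
      · have n1 : x0 ≠ p := fun hh => hp0 (by rw [← hh])
        have n2 : x0 ≠ q := fun hh => hq0 (by rw [← hh])
        exact ⟨x0, p, q, n1, n2, hpq, h, hcp, hcq, Or.inl ⟨Or.inl rfl, ⟨hp0, hpN⟩, ⟨hq0, hqN⟩⟩⟩
      · have n1 : xe ≠ p := fun hh => hpN (by rw [← hh])
        have n2 : xe ≠ q := fun hh => hqN (by rw [← hh])
        exact ⟨xe, p, q, n1, n2, hpq, h, hcp, hcq, Or.inl ⟨Or.inr rfl, ⟨hp0, hpN⟩, ⟨hq0, hqN⟩⟩⟩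

theorem stmt_18 (n : ℕ) (hn : 3 ≤ n) :
    (∀ M : Fin n → Fin (3 * n - 2) → Bool,
      Simple' M → (∀ j, ColSpec18 n (fun i => M i j)) → Saturated T32 M) ∧
    (∃ M : Fin n → Fin (3 * n - 2) → Bool,
      Simple' M ∧ (∀ j, ColSpec18 n (fun i => M i j)) ∧ Saturated T32 M) := by
  have part1 : ∀ M : Fin n → Fin (3 * n - 2) → Bool,
      Simple' M → (∀ j, ColSpec18 n (fun i => M i j)) → Saturated T32 M := by
    intro M hS hspec
    have hall : ∀ D : Fin n → Bool, ColSpec18 n D → IsCol M D := by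
      classical
      intro D hD
      set A : Finset (Fin n → Bool) := Finset.univ.filter (fun D' => ColSpec18 n D') with hA
      have hmem : ∀ j : Fin (3*n-2), (fun i => M i j) ∈ A :=
        fun j => Finset.mem_filter.mpr ⟨Finset.mem_univ _, hspec j⟩
      have hAcard : A.card ≤ (Finset.univ : Finset (Fin (3*n-2))).card := by
        have hsub : A ⊆ (Finset.range (3*n-2)).image (fun j => colOf18 n j) := by
          intro D' hD'
          obtain ⟨j, hj, hcol⟩ := colOf18_surj n hn D' (Finset.mem_filter.mp hD').2
          exact Finset.mem_image.mpr ⟨j, Finset.mem_range.mpr hj, (funext fun i => hcol i).symm⟩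
        calc A.card ≤ _ := Finset.card_le_card hsub
          _ ≤ (Finset.range (3*n-2)).card := Finset.card_image_le
          _ = 3*n-2 := Finset.card_range _
          _ = (Finset.univ : Finset (Fin (3*n-2))).card := (Finset.card_fin _).symm
      have key := Finset.surj_on_of_inj_on_of_card_le
        (fun (j : Fin (3*n-2)) (_ : j ∈ Finset.univ) => (fun i => M i j))
        (fun j _ => hmem j)
        (fun j1 j2 _ _ hcols => hS j1 j2 (fun i => congrFun hcols i))
        hAcard
      obtain ⟨j, _, hj⟩ := key D (Finset.mem_filter.mpr ⟨Finset.mem_univ _, hD⟩)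
      exact ⟨j, fun i => congrFun hj.symm i⟩
    have hM : 3 * n - 2 = 3 * n - 2 := rfl
    refine ⟨hS, free_of_spec M hspec, ?_⟩
    intro C hC
    have hCn : ¬ ColSpec18 n C := fun h => hC (hall C h)
    obtain ⟨z, u, v, hzu, hzv, huv, hCz, hCu, hCv, hcfg⟩ := notSpec_cases hn hCn
    have s1 : ColSpec18 n (fun i => decide (i = z ∨ i = v)) := by
      apply pair_spec hn hzv
      rcases hcfg with ⟨h1, h2, h3⟩ | ⟨h1, h2, h3⟩
      exacts [Or.inl ⟨h1, h3⟩, Or.inr ⟨h3, h1⟩]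
    have s2 : ColSpec18 n (fun i => decide (i = z ∨ i = u)) := by
      apply pair_spec hn hzu
      rcases hcfg with ⟨h1, h2, h3⟩ | ⟨h1, h2, h3⟩
      exacts [Or.inl ⟨h1, h2⟩, Or.inr ⟨h2, h1⟩]
    obtain ⟨j1, hj1⟩ := hall _ s1
    obtain ⟨j2, hj2⟩ := hall _ s2
    exact build18 M C hzu hzv huv hCz hCu hCv hj1 hj2
  refine ⟨part1, ?_⟩
  refine ⟨fun i j => colOf18 n (j : ℕ) i, ?_, ?_, ?_⟩
  · intro j1 j2 h
    exact Fin.ext (colOf18_inj n hn j1.isLt j2.isLt h)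
  · intro j
    exact colOf18_spec n hn (j : ℕ) j.isLt
  · exact part1 _ (fun j1 j2 h => Fin.ext (colOf18_inj n hn j1.isLt j2.isLt h))
      (fun j => colOf18_spec n hn (j : ℕ) j.isLt)
end

section
/- There is an absolute constant c > 0 such that for all n ≥ 3, sat(n, T_3^2) ≥ n + c·√n, where T_3^2 is the 3×3 matrix whose columns are the three length-3 columns with exactly two ones. -/
/-!
View `M` as the family `𝒮` of its column supports, so `#𝒮 = m`. Saturation forces `∅`, the full
row set and all `n` singletons into `𝒮`, whence `m ≥ n + 2 + k`, where `k` counts the members of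
size between `2` and `n - 1`. Two distinct rows with the same trace on these `k` middle sets force
their pair into `𝒮`, so `n ≤ t + k` for the number `t` of distinct traces. Since `T32` is symmetric
the traces form a `T32`-free family on `k` points, and deleting a point one at a time
(Anstee–Sali) gives `t ≤ k² + 1`. Hence `n ≤ (k + 1)²` and `m ≥ n + √n`.
-/

open Finset

section Families

variable {α : Type*}

def DFree (W : Finset (Finset α)) : Prop :=
  ∀ A ∈ W, ∀ B ∈ W, ∀ C ∈ W, ∀ a b : α,
    a ∈ A → a ∉ B → a ∈ C → b ∉ A → b ∈ B → b ∈ C → False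

/-- The points `a, b, c` and the sets `A, B, C` have incidence matrix `T32`. -/
def IsT32Pattern (A B C : Finset α) (a b c : α) : Prop :=
  a ∉ A ∧ a ∈ B ∧ a ∈ C ∧ b ∈ A ∧ b ∉ B ∧ b ∈ C ∧ c ∈ A ∧ c ∈ B ∧ c ∉ C

def T32Free (W : Finset (Finset α)) : Prop :=
  ∀ A ∈ W, ∀ B ∈ W, ∀ C ∈ W, ∀ a b c : α, ¬ IsT32Pattern A B C a b c

theorem T32Free.mono {W W' : Finset (Finset α)} (hW : T32Free W) (h : W' ⊆ W) :
    T32Free W' :=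
  fun A hA B hB C hC => hW A (h hA) B (h hB) C (h hC)

theorem card_le_one_of_subset_powerset_empty {W : Finset (Finset α)}
    (hW : W ⊆ (∅ : Finset α).powerset) : #W ≤ 1 := by
  simpa using card_le_card hW

variable [DecidableEq α]

def twins (W : Finset (Finset α)) (x : α) : Finset (Finset α) :=
  W.filter fun P => x ∉ P ∧ insert x P ∈ W

theorem card_eq_card_image_erase_add_card_twins (W : Finset (Finset α)) (x : α) :
    #W = #(W.image (·.erase x)) + #(twins W x) := by
  set W₀ := W.filter (x ∉ ·)
  set W₁ := W.filter (x ∈ ·)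
  have h_image : W.image (·.erase x) = W₀ ∪ W₁.image (·.erase x) := by
    ext P
    simp only [W₀, W₁, mem_image, mem_union, mem_filter]
    constructor
    · rintro ⟨Q, hQ, rfl⟩
      by_cases hx : x ∈ Q
      · exact Or.inr ⟨Q, ⟨hQ, hx⟩, rfl⟩
      · exact Or.inl ⟨by rwa [erase_eq_of_notMem hx], notMem_erase x Q⟩
    · rintro (⟨hP, hx⟩ | ⟨Q, ⟨hQ, -⟩, rfl⟩)
      · exact ⟨P, hP, erase_eq_of_notMem hx⟩
      · exact ⟨Q, hQ, rfl⟩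
  have h_twins : twins W x = W₀ ∩ W₁.image (·.erase x) := by
    ext P
    simp only [twins, W₀, W₁, mem_image, mem_inter, mem_filter]
    constructor
    · rintro ⟨hP, hx, hxP⟩
      exact ⟨⟨hP, hx⟩, insert x P, ⟨hxP, mem_insert_self x P⟩, erase_insert hx⟩
    · rintro ⟨⟨hP, hx⟩, Q, ⟨hQ, hxQ⟩, rfl⟩
      exact ⟨hP, hx, by rwa [insert_erase hxQ]⟩
  have h_inj : #(W₁.image (·.erase x)) = #W₁ :=
    card_image_of_injOn fun P hP Q hQ h => by
      simp only [W₁, mem_coe, mem_filter] at hP hQ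
      rw [← insert_erase hP.2, ← insert_erase hQ.2]
      exact congrArg (insert x) h
  have := card_union_add_card_inter W₀ (W₁.image (·.erase x))
  have : #W₁ + #W₀ = #W := card_filter_add_card_filter_not _
  rw [h_image, h_twins]
  omega

theorem image_erase_subset_powerset {W : Finset (Finset α)} {x : α} {S : Finset α}
    (hW : W ⊆ (insert x S).powerset) : W.image (·.erase x) ⊆ S.powerset := by
  simp only [image_subset_iff, mem_powerset, ← subset_insert_iff]
  exact fun A hA => mem_powerset.1 (hW hA)

theorem twins_subset_powerset {W : Finset (Finset α)} {x : α} {S : Finset α}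
    (hW : W ⊆ (insert x S).powerset) : twins W x ⊆ S.powerset := fun P hP => by
  simp only [twins, mem_filter] at hP
  exact mem_powerset.2 ((subset_insert_iff_of_notMem hP.2.1).1 (mem_powerset.1 (hW hP.1)))

namespace DFree

theorem image_erase {W : Finset (Finset α)} (hW : DFree W) (x : α) :
    DFree (W.image (·.erase x)) := by
  simp only [DFree, mem_image, forall_exists_index, and_imp, forall_apply_eq_imp_iff₂]
  intro A hA B hB C hC a b haA haB haC hbA hbB hbC
  have hax : a ≠ x := ne_of_mem_erase haA
  have hbx : b ≠ x := ne_of_mem_erase hbB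
  simp only [mem_erase, ne_eq, hax, hbx, not_false_eq_true, true_and] at *
  exact hW A hA B hB C hC a b haA haB haC hbA hbB hbC

theorem card_twins_le_one {W : Finset (Finset α)} (hW : DFree W) (x : α) :
    #(twins W x) ≤ 1 := by
  have h_sub : ∀ P ∈ twins W x, ∀ Q ∈ twins W x, P ⊆ Q := by
    intro P hP Q hQ a haP
    simp only [twins, mem_filter] at hP hQ
    by_contra haQ
    exact hW P hP.1 (insert x Q) hQ.2.2 (insert x P) hP.2.2 a x haP
      (by simp [haQ, ne_of_mem_of_not_mem haP hP.2.1]) (mem_insert_of_mem haP) hP.2.1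
      (mem_insert_self x Q) (mem_insert_self x P)
  exact card_le_one.2 fun P hP Q hQ => (h_sub P hP Q hQ).antisymm (h_sub Q hQ P hP)

theorem card_le {W : Finset (Finset α)} (hW : DFree W) {R : Finset α}
    (hWR : W ⊆ R.powerset) : #W ≤ #R + 1 := by
  induction R using Finset.induction_on generalizing W with
  | empty => exact card_le_one_of_subset_powerset_empty hWR
  | insert x S hx ih =>
    rw [card_eq_card_image_erase_add_card_twins W x, card_insert_of_notMem hx]
    have := ih (hW.image_erase x) (image_erase_subset_powerset hWR)
    have := hW.card_twins_le_one x
    omega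

end DFree

namespace T32Free

theorem image_erase {W : Finset (Finset α)} (hW : T32Free W) (x : α) :
    T32Free (W.image (·.erase x)) := by
  simp only [T32Free, mem_image, forall_exists_index, and_imp, forall_apply_eq_imp_iff₂]
  rintro A hA B hB C hC a b c ⟨haA, haB, haC, hbA, hbB, hbC, hcA, hcB, hcC⟩
  have hax : a ≠ x := ne_of_mem_erase haB
  have hbx : b ≠ x := ne_of_mem_erase hbA
  have hcx : c ≠ x := ne_of_mem_erase hcA
  simp only [mem_erase, ne_eq, hax, hbx, hcx, not_false_eq_true, true_and] at *
  exact hW A hA B hB C hC a b c ⟨haA, haB, haC, hbA, hbB, hbC, hcA, hcB, hcC⟩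

theorem dFree_twins {W : Finset (Finset α)} (hW : T32Free W) (x : α) : DFree (twins W x) := by
  simp only [DFree, twins, mem_filter]
  rintro A ⟨-, hxA, hA⟩ B ⟨-, hxB, hB⟩ C ⟨hC, hxC, -⟩ a b haA haB haC hbA hbB hbC
  exact hW C hC (insert x A) hA (insert x B) hB x b a ⟨hxC, mem_insert_self x A,
    mem_insert_self x B, hbC, by simp [hbA, ne_of_mem_of_not_mem hbB hxB],
    mem_insert_of_mem hbB, haC, mem_insert_of_mem haA,
    by simp [haB, ne_of_mem_of_not_mem haA hxA]⟩

theorem card_le {W : Finset (Finset α)} (hW : T32Free W) {R : Finset α}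
    (hWR : W ⊆ R.powerset) : #W ≤ #R * #R + 1 := by
  induction R using Finset.induction_on generalizing W with
  | empty => exact card_le_one_of_subset_powerset_empty hWR
  | insert x S hx ih =>
    rw [card_eq_card_image_erase_add_card_twins W x, card_insert_of_notMem hx]
    have := ih (hW.image_erase x) (image_erase_subset_powerset hWR)
    have := (hW.dFree_twins x).card_le (twins_subset_powerset hWR)
    nlinarith

/-- The traces of points on `W` form the transposed incidence structure, and `T32` is symmetric. -/
theorem image_filter_mem {W : Finset (Finset α)} (hW : T32Free W) (s : Finset α) :
    T32Free (s.image fun a => W.filter (a ∈ ·)) := by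
  simp only [T32Free, mem_image, forall_exists_index, and_imp, forall_apply_eq_imp_iff₂]
  rintro p - q - w - X Y Z ⟨hX, hX', hX'', hY, hY', hY'', hZ, hZ', hZ''⟩
  simp only [mem_filter, not_and] at *
  exact hW X hX'.1 Y hY.1 Z hZ.1 p q w ⟨hX hX'.1, hY.2, hZ.2, hX'.2, hY' hY.1, hZ'.2, hX''.2,
    hY''.2, hZ'' hZ.1⟩

end T32Free

end Families

theorem card_le_card_image_add_card {ι β : Type*} [Fintype ι] [DecidableEq ι] [DecidableEq β]
    (f : ι → β) {P : Finset (Finset ι)} (hP : ∀ a b, a ≠ b → f a = f b → {a, b} ∈ P) :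
    Fintype.card ι ≤ #(univ.image f) + #P := by
  rcases isEmpty_or_nonempty ι with _ | _
  · simp
  -- a row that is not the chosen representative `rep a` of its fibre is sent to `{a, rep a} ∈ P`
  set rep : ι → ι := fun a => Function.invFun f (f a)
  have hf_rep (a : ι) : f (rep a) = f a := Function.invFun_eq ⟨a, rfl⟩
  have hrep_rep (a : ι) : rep (rep a) = rep a := congrArg (Function.invFun f) (hf_rep a)
  rw [← card_univ, ← card_filter_add_card_filter_not (fun a => rep a = a)]
  gcongr
  · refine card_le_card_of_injOn f (fun a _ => mem_image_of_mem f (mem_univ a)) ?_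
    intro a ha b hb hab
    simp only [mem_coe, mem_filter, mem_univ, true_and] at ha hb
    rw [← ha, ← hb]
    exact congrArg (Function.invFun f) hab
  · refine card_le_card_of_injOn (fun a => {a, rep a}) (fun a ha => ?_) ?_
    · simp only [mem_coe, mem_filter, mem_univ, true_and] at ha
      exact hP a (rep a) (Ne.symm ha) (hf_rep a).symm
    intro a ha b hb hab
    simp only [mem_coe, mem_filter, mem_univ, true_and] at ha hb hab
    have : a ∈ ({b, rep b} : Finset ι) := hab ▸ mem_insert_self a {rep a}
    rcases mem_insert.1 this with h | h
    · exact h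
    · exact absurd (mem_singleton.1 h ▸ hrep_rep b) ha

section Saturated

variable {α : Type*} [DecidableEq α]

/-- Adding any new set `s` creates a copy of `T32`; as `T32` is symmetric, `s` may be taken to be
its third column. -/
def T32Saturated (𝒮 : Finset (Finset α)) : Prop :=
  T32Free 𝒮 ∧ ∀ s ∉ 𝒮, ∃ X ∈ 𝒮, ∃ Y ∈ 𝒮, ∃ x y z, IsT32Pattern X Y s x y z

namespace T32Saturated

theorem mem_of_card_le_one {𝒮 : Finset (Finset α)} (h : T32Saturated 𝒮) {s : Finset α}
    (hs : #s ≤ 1) : s ∈ 𝒮 := by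
  by_contra hs𝒮
  obtain ⟨X, -, Y, -, x, y, z, hxX, -, hxs, hyX, -, hys, -⟩ := h.2 s hs𝒮
  exact ne_of_mem_of_not_mem hyX hxX (card_le_one.1 hs y hys x hxs)

end T32Saturated

variable [Fintype α]

def midSets (𝒮 : Finset (Finset α)) : Finset (Finset α) :=
  𝒮.filter fun X => 2 ≤ #X ∧ #X < Fintype.card α

def midTraces (𝒮 : Finset (Finset α)) : Finset (Finset (Finset α)) :=
  univ.image fun a => (midSets 𝒮).filter (a ∈ ·)

namespace T32Saturated

variable {𝒮 : Finset (Finset α)}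

theorem univ_mem (h : T32Saturated 𝒮) : univ ∈ 𝒮 := by
  by_contra hs𝒮
  obtain ⟨X, -, Y, -, x, y, z, -, -, -, -, -, -, -, -, hz⟩ := h.2 univ hs𝒮
  exact hz (mem_univ z)

theorem pair_mem (h : T32Saturated 𝒮) {a b : α} (hab : a ≠ b)
    (hb : ∀ X ∈ midSets 𝒮, a ∈ X → b ∈ X) : {a, b} ∈ 𝒮 := by
  have h_mid (Z : Finset α) (hZ : Z ∈ 𝒮) (z : α) (hz : z ∉ ({a, b} : Finset α)) (haZ : a ∈ Z)
      (hzZ : z ∈ Z) (hbZ : b ∉ Z) : False := by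
    have hza : a ≠ z := by rintro rfl; simp at hz
    have h_two : 2 ≤ #Z := by
      simpa [card_pair hza] using card_le_card (insert_subset haZ (singleton_subset_iff.2 hzZ))
    exact hbZ (hb Z (mem_filter.2 ⟨hZ, h_two, card_lt_univ_of_notMem hbZ⟩) haZ)
  by_contra hs
  obtain ⟨X, hX, Y, hY, x, y, z, hxX, hxY, hxs, hyX, hyY, hys, hzX, hzY, hzs⟩ := h.2 _ hs
  simp only [mem_insert, mem_singleton] at hxs hys
  rcases hxs with rfl | rfl <;> rcases hys with rfl | rfl
  · exact hxX hyX
  · exact h_mid Y hY z hzs hxY hzY hyY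
  · exact h_mid X hX z hzs hyX hzX hxX
  · exact hxX hyX

theorem card_add_card_midSets_le (h : T32Saturated 𝒮) (hα : 2 ≤ Fintype.card α) :
    Fintype.card α + 2 + #(midSets 𝒮) ≤ #𝒮 := by
  set 𝒯 : Finset (Finset α) := insert ∅ (insert univ (univ.image singleton))
  have h𝒯 : #𝒯 = Fintype.card α + 2 := by
    have h_univ : univ ∉ univ.image (singleton : α → Finset α) := by
      simp only [mem_image, mem_univ, true_and, not_exists]
      intro a ha
      have := congrArg card ha
      simp only [card_singleton, card_univ] at this
      omega
    rw [card_insert_of_notMem, card_insert_of_notMem h_univ,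
      card_image_of_injective _ singleton_injective, card_univ]
    simp only [mem_insert, mem_image, mem_univ, true_and, not_or, not_exists]
    refine ⟨fun h => ?_, fun a => singleton_ne_empty a⟩
    have := congrArg card h
    simp only [card_empty, card_univ] at this
    omega
  have h_disj : Disjoint 𝒯 (midSets 𝒮) := by
    rw [disjoint_left]
    intro X hX hX_mid
    simp only [𝒯, mem_insert, mem_image, mem_univ, true_and] at hX
    rcases hX with rfl | rfl | ⟨a, rfl⟩ <;> simp [midSets] at hX_mid
  have h_sub : 𝒯 ∪ midSets 𝒮 ⊆ 𝒮 := by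
    simp only [𝒯, midSets, union_subset_iff, insert_subset_iff, image_subset_iff, mem_univ,
      forall_const, filter_subset, and_true]
    exact ⟨h.mem_of_card_le_one (by simp), h.univ_mem,
      fun a => h.mem_of_card_le_one (by simp)⟩
  have := card_le_card h_sub
  rw [card_union_of_disjoint h_disj, h𝒯] at this
  exact this

theorem card_le_card_midTraces_add (h : T32Saturated 𝒮) (hα : 3 ≤ Fintype.card α) :
    Fintype.card α ≤ #(midTraces 𝒮) + #(midSets 𝒮) := by
  refine card_le_card_image_add_card _ fun a b hab h_tr => ?_
  have hb (X : Finset α) (hX : X ∈ midSets 𝒮) (haX : a ∈ X) : b ∈ X := by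
    have : X ∈ (midSets 𝒮).filter (b ∈ ·) := h_tr ▸ mem_filter.2 ⟨hX, haX⟩
    exact (mem_filter.1 this).2
  exact mem_filter.2 ⟨h.pair_mem hab hb, by rw [card_pair hab]; omega⟩

theorem card_midTraces_le (h : T32Saturated 𝒮) :
    #(midTraces 𝒮) ≤ #(midSets 𝒮) * #(midSets 𝒮) + 1 :=
  ((h.1.mono (filter_subset _ _)).image_filter_mem univ).card_le fun _ hA => by
    obtain ⟨a, -, rfl⟩ := mem_image.1 hA
    exact mem_powerset.2 (filter_subset _ _)

theorem card_add_sqrt_card_le (h : T32Saturated 𝒮) (hα : 3 ≤ Fintype.card α) :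
    (Fintype.card α : ℝ) + √(Fintype.card α) ≤ #𝒮 := by
  set k := #(midSets 𝒮)
  have h_sq : Fintype.card α ≤ (k + 1) ^ 2 := by
    have := h.card_le_card_midTraces_add hα
    have := h.card_midTraces_le
    nlinarith
  have h_sqrt : √(Fintype.card α) ≤ k + 1 :=
    (Real.sqrt_le_left (by positivity)).2 (by exact_mod_cast h_sq)
  have : (Fintype.card α + 2 + k : ℝ) ≤ #𝒮 := by
    exact_mod_cast h.card_add_card_midSets_le (by omega)
  linarith

end T32Saturated

end Saturated

theorem vecCons_three_injective {β : Type*} {x y z : β} (hxy : x ≠ y) (hxz : x ≠ z)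
    (hyz : y ≠ z) : Function.Injective ![x, y, z] := by
  intro i j h
  fin_cases i <;> fin_cases j <;> simp_all [eq_comm]

theorem T32_apply (i j : Fin 3) : T32 i j = decide (i ≠ j) := by
  revert i j; decide

theorem exists_rows_of_isSubmatrix_addCol {α : Type*} {k c n m : ℕ} {F : Fin k → Fin c → α}
    {M : Fin n → Fin m → α} {C : Fin n → α} (hM : ¬ IsSubmatrix F M)
    (h : IsSubmatrix F (addCol M C)) :
    ∃ r : Fin k → Fin n, ∃ j₀ : Fin c, (∀ i, C (r i) = F i j₀) ∧
      ∀ j ≠ j₀, ∃ j' : Fin m, ∀ i, M (r i) j' = F i j := by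
  obtain ⟨r, s, hr, hs, hrs⟩ := h
  by_cases h_old : ∀ j, (s j : ℕ) < m
  · refine absurd ⟨r, fun j => ⟨s j, h_old j⟩, hr, fun j j' hj => hs ?_, fun i j => ?_⟩ hM
    · exact Fin.ext (by simpa using congrArg Fin.val hj)
    · simpa [addCol, h_old j] using hrs i j
  obtain ⟨j₀, hj₀⟩ := not_forall.1 h_old
  refine ⟨r, j₀, fun i => by simpa [addCol, hj₀] using hrs i j₀, fun j hj => ?_⟩
  have hj_lt : (s j : ℕ) < m := by
    have := (s j).isLt
    have := (s j₀).isLt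
    have : (s j : ℕ) ≠ s j₀ := fun h => hj (hs (Fin.ext h))
    omega
  exact ⟨⟨s j, hj_lt⟩, fun i => by simpa [addCol, hj_lt] using hrs i j⟩

section ColumnSupports

variable {n m : ℕ}

def colSupport (M : Fin n → Fin m → Bool) (j : Fin m) : Finset (Fin n) :=
  univ.filter (M · j)

def colSupports (M : Fin n → Fin m → Bool) : Finset (Finset (Fin n)) :=
  univ.image (colSupport M)

@[simp]
theorem mem_colSupport {M : Fin n → Fin m → Bool} {i : Fin n} {j : Fin m} :
    i ∈ colSupport M j ↔ M i j = true := by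
  simp [colSupport]

theorem card_colSupports {M : Fin n → Fin m → Bool} (hM : Simple' M) : #(colSupports M) = m := by
  rw [colSupports, card_image_of_injective, card_univ, Fintype.card_fin]
  intro j j' h
  refine hM j j' fun i => ?_
  have := congrArg (i ∈ ·) h
  simp only [mem_colSupport, eq_iff_iff] at this
  exact Bool.eq_iff_iff.2 this

theorem t32Free_colSupports {M : Fin n → Fin m → Bool} (hM : ¬ IsSubmatrix T32 M) :
    T32Free (colSupports M) := by
  simp only [T32Free, colSupports, mem_image, mem_univ, true_and, forall_exists_index,
    forall_apply_eq_imp_iff]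
  rintro jA jB jC a b c ⟨haA, haB, haC, hbA, hbB, hbC, hcA, hcB, hcC⟩
  simp only [mem_colSupport, Bool.not_eq_true] at *
  refine hM ⟨![a, b, c], ![jA, jB, jC], vecCons_three_injective ?_ ?_ ?_,
    vecCons_three_injective ?_ ?_ ?_, fun i j => ?_⟩
  rotate_right
  · fin_cases i <;> fin_cases j <;> simp [T32, *]
  all_goals rintro rfl; simp_all

theorem Saturated.t32Saturated_colSupports {M : Fin n → Fin m → Bool} (hM : Saturated T32 M) :
    T32Saturated (colSupports M) := by
  obtain ⟨-, h_free, h_sat⟩ := hM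
  refine ⟨t32Free_colSupports h_free, fun s hs => ?_⟩
  have h_col : ¬ IsCol M (fun i => decide (i ∈ s)) := by
    rintro ⟨j, hj⟩
    exact hs (mem_image.2 ⟨j, mem_univ j, by ext i; simp [hj]⟩)
  obtain ⟨r, j₀, hr_s, h_cols⟩ := exists_rows_of_isSubmatrix_addCol h_free (h_sat _ h_col)
  obtain ⟨i₁, i₂, h₁₂, h₁, h₂⟩ :=
    (by decide : ∀ j₀ : Fin 3, ∃ i₁ i₂ : Fin 3, i₁ ≠ i₂ ∧ i₁ ≠ j₀ ∧ i₂ ≠ j₀) j₀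
  obtain ⟨j₁, hj₁⟩ := h_cols i₁ h₁
  obtain ⟨j₂, hj₂⟩ := h_cols i₂ h₂
  have hr_s' (i : Fin 3) : r i ∈ s ↔ i ≠ j₀ :=
    decide_eq_decide.1 ((hr_s i).trans (T32_apply i j₀))
  refine ⟨colSupport M j₁, mem_image_of_mem _ (mem_univ _), colSupport M j₂,
    mem_image_of_mem _ (mem_univ _), r i₁, r i₂, r j₀, ?_⟩
  simp [IsT32Pattern, hj₁, hj₂, hr_s', T32_apply, h₁₂, h₁, h₂, h₁₂.symm, h₁.symm, h₂.symm]

end ColumnSupports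

theorem stmt_19 :
    ∃ c : ℝ, 0 < c ∧ ∀ n : ℕ, 3 ≤ n → ∀ m : ℕ, ∀ M : Fin n → Fin m → Bool,
      Saturated T32 M → (n : ℝ) + c * Real.sqrt n ≤ m := by
  refine ⟨1, one_pos, fun n hn m M hM => ?_⟩
  have := hM.t32Saturated_colSupports.card_add_sqrt_card_le (by simpa using hn)
  rwa [Fintype.card_fin, card_colSupports hM.1, ← one_mul √(n : ℝ)] at this
end
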